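/- Let η(x) = x log x with η(0) = 0, and for n×n positive semidefinite matrices A, B define J(A,B) := (1/2)Tr(η(A)) + (1/2)Tr(η(B)) - Tr(η((A+B)/2)) and, for t > 0, d_t(A,B)² := Tr(log((A+B)/2 + tI)) - (1/2)Tr(log(A+tI)) - (1/2)Tr(log(B+tI)). Then J(A,B) = ∫₀^∞ d_t(A,B)² dt. -/

import Mathlib

open Set Filter MeasureTheory Topology


open scoped BigOperators ComplexOrder
open Matrix

open Classical in
noncomputable def trFun {I : Type*} [Fintype I] [DecidableEq I]
    (f : ℝ → ℝ) (A : Matrix I I ℂ) : ℝ :=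
  if hA : A.IsHermitian then ∑ i, f (hA.eigenvalues i) else 0

open Classical in
noncomputable def psqrt {I : Type*} [Fintype I] [DecidableEq I]
    (A : Matrix I I ℂ) : Matrix I I ℂ :=
  if hA : A.PosSemidef then
    (hA.1.eigenvectorUnitary : Matrix I I ℂ) * diagonal ((↑) ∘ (√·) ∘ hA.1.eigenvalues) *
      (star hA.1.eigenvectorUnitary : Matrix I I ℂ)
  else 0

noncomputable def geoMean {I : Type*} [Fintype I] [DecidableEq I]
    (A B : Matrix I I ℂ) : Matrix I I ℂ :=
  psqrt A * psqrt ((psqrt A)⁻¹ * B * (psqrt A)⁻¹) * psqrt A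

noncomputable def dsqLog {I : Type*} [Fintype I] [DecidableEq I]
    (A B : Matrix I I ℂ) : ℝ :=
  trFun Real.log (((1 : ℝ) / 2) • (A + B))
    - (1 / 2) * trFun Real.log A - (1 / 2) * trFun Real.log B

noncomputable def Jdiv {I : Type*} [Fintype I] [DecidableEq I]
    (A B : Matrix I I ℂ) : ℝ :=
  (1 / 2) * trFun (fun x => x * Real.log x) A
    + (1 / 2) * trFun (fun x => x * Real.log x) B
    - trFun (fun x => x * Real.log x) (((1 : ℝ) / 2) • (A + B))

-- auxiliary lemmas

lemma abs_log_one_add_sub_le {u : ℝ} (hu : 0 ≤ u) : |Real.log (1 + u) - u| ≤ u ^ 2 := by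
  have hpos : (0:ℝ) < 1 + u := by linarith
  have h1 : Real.log (1 + u) ≤ u := by
    have := Real.log_le_sub_one_of_pos hpos; linarith
  have h2 : u - u ^ 2 ≤ Real.log (1 + u) := by
    have hinv := Real.log_le_sub_one_of_pos (show (0:ℝ) < (1+u)⁻¹ by positivity)
    rw [Real.log_inv] at hinv
    have h3 : (1+u)⁻¹ ≤ 1 - u + u ^ 2 := by
      rw [inv_le_iff_one_le_mul₀ hpos]
      nlinarith [pow_nonneg hu 3]
    linarith
  rw [abs_le]
  constructor <;> nlinarith [sq_nonneg u]

lemma k_tendsto {x : ℝ} (hx : 0 ≤ x) :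
    Tendsto (fun T => (x+T) * Real.log (x+T) - T * Real.log T - x * Real.log T - x)
      atTop (𝓝 0) := by
  have hdiv : Tendsto (fun T : ℝ => x / T) atTop (𝓝 0) :=
    Tendsto.div_atTop tendsto_const_nhds tendsto_id
  have h1 : Tendsto (fun T : ℝ => Real.log (1 + x / T)) atTop (𝓝 0) := by
    have : Tendsto (fun T : ℝ => 1 + x / T) atTop (𝓝 1) := by
      simpa using tendsto_const_nhds.add hdiv
    have hc : ContinuousAt Real.log 1 := Real.continuousAt_log one_ne_zero
    have h := hc.tendsto.comp this
    rw [Real.log_one] at h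
    exact h
  have h2 := Real.tendsto_mul_log_one_add_div_atTop x
  have h3 : Tendsto (fun T : ℝ => x * Real.log (1 + x / T) + T * Real.log (1 + x / T) - x)
      atTop (𝓝 0) := by
    have := ((tendsto_const_nhds (x := x)).mul h1).add h2
    simpa using this.sub_const x
  refine h3.congr' ?_
  filter_upwards [eventually_gt_atTop 0] with T hT
  have hxT : (0:ℝ) < x + T := by linarith
  have e1 : 1 + x / T = (x + T) / T := by field_simp; ring
  rw [e1, Real.log_div (ne_of_gt hxT) (ne_of_gt hT)]
  ring

lemma log_integrableOn_Ioc {x : ℝ} (hx : 0 ≤ x) :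
    IntegrableOn (fun t => Real.log (x + t)) (Ioc (0:ℝ) 1) := by
  have hg : IntegrableOn (fun t : ℝ => 2 * t ^ (-2⁻¹ : ℝ) + (x + 1)) (Ioc (0:ℝ) 1) := by
    apply Integrable.add
    · have : IntervalIntegrable (fun t : ℝ => t ^ (-2⁻¹ : ℝ)) volume 0 1 :=
        intervalIntegral.intervalIntegrable_rpow' (by norm_num)
      rw [intervalIntegrable_iff_integrableOn_Ioc_of_le zero_le_one] at this
      exact this.const_mul 2
    · exact integrableOn_const (by simp) (by simp)
  refine Integrable.mono' hg ?_ ?_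
  · refine (ContinuousOn.aestronglyMeasurable ?_ measurableSet_Ioc)
    intro t ht
    exact (Real.continuousAt_log (by nlinarith [ht.1] : x + t ≠ 0)).comp
      (by fun_prop) |>.continuousWithinAt
  · filter_upwards [ae_restrict_mem measurableSet_Ioc] with t ht
    have ht0 : (0:ℝ) < t := ht.1
    have hxt : (0:ℝ) < x + t := by linarith
    rw [Real.norm_eq_abs, abs_le]
    have hrp : (0:ℝ) < t ^ (-2⁻¹ : ℝ) := Real.rpow_pos_of_pos ht0 _
    constructor
    · -- lower bound
      have hlog : Real.log t ≤ Real.log (x + t) := Real.log_le_log ht0 (by linarith)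
      have h1 : Real.log (t ^ (-2⁻¹ : ℝ)) = (-2⁻¹) * Real.log t := Real.log_rpow ht0 _
      have h2 : Real.log (t ^ (-2⁻¹ : ℝ)) ≤ t ^ (-2⁻¹ : ℝ) := by
        have := Real.log_le_sub_one_of_pos hrp; linarith
      nlinarith
    · -- upper bound
      have h1 : Real.log (x + t) ≤ Real.log (x + 1) := Real.log_le_log hxt (by linarith [ht.2])
      have h2 : Real.log (x + 1) ≤ x := by
        have := Real.log_le_sub_one_of_pos (show (0:ℝ) < x + 1 by linarith); linarith
      linarith

lemma abs_m_le {x t : ℝ} (hx : 0 ≤ x) (ht : 0 < t) :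
    |Real.log (x + t) - Real.log t - x / t| ≤ x ^ 2 / t ^ 2 := by
  have hxt : (0:ℝ) < x + t := by linarith
  have e1 : Real.log (x + t) - Real.log t = Real.log (1 + x / t) := by
    rw [show 1 + x / t = (x + t) / t by field_simp; ring,
      Real.log_div (ne_of_gt hxt) (ne_of_gt ht)]
  rw [e1]
  have := abs_log_one_add_sub_le (show (0:ℝ) ≤ x / t by positivity)
  calc |Real.log (1 + x/t) - x/t| ≤ (x/t)^2 := this
    _ = x^2/t^2 := by rw [div_pow]

lemma core {n : ℕ} (a b c : Fin n → ℝ) (ha : ∀ i, 0 ≤ a i) (hb : ∀ i, 0 ≤ b i)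
    (hc : ∀ i, 0 ≤ c i)
    (hsum : ∑ i, c i = 1/2 * ∑ i, a i + 1/2 * ∑ i, b i) :
    ∫ t in Ioi (0:ℝ), (∑ i, Real.log (c i + t) - 1/2 * ∑ i, Real.log (a i + t)
        - 1/2 * ∑ i, Real.log (b i + t))
      = 1/2 * ∑ i, (a i * Real.log (a i)) + 1/2 * ∑ i, (b i * Real.log (b i))
        - ∑ i, (c i * Real.log (c i)) := by
  set F : ℝ → ℝ := fun t => ∑ i, Real.log (c i + t) - 1/2 * ∑ i, Real.log (a i + t)
      - 1/2 * ∑ i, Real.log (b i + t) with hF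
  set G : ℝ → ℝ := fun t => ∑ i, ((c i + t) * Real.log (c i + t))
      - 1/2 * ∑ i, ((a i + t) * Real.log (a i + t))
      - 1/2 * ∑ i, ((b i + t) * Real.log (b i + t)) with hG
  have hη : Continuous fun x : ℝ => x * Real.log x := Real.continuous_mul_log
  have hGcont : Continuous G := by
    refine ((continuous_finset_sum _ fun i _ => ?_).sub
      (continuous_const.mul (continuous_finset_sum _ fun i _ => ?_))).sub
      (continuous_const.mul (continuous_finset_sum _ fun i _ => ?_)) <;>
      exact hη.comp (continuous_const.add continuous_id)
  have hderiv : ∀ t ∈ Ioi (0:ℝ), HasDerivAt G (F t) t := by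
    intro t ht
    have ht0 : (0:ℝ) < t := ht
    have hterm : ∀ x : ℝ, 0 ≤ x →
        HasDerivAt (fun s => (x + s) * Real.log (x + s)) (Real.log (x + t) + 1) t := by
      intro x hx
      have h0 : x + t ≠ 0 := ne_of_gt (by linarith)
      have h := Real.hasDerivAt_mul_log h0
      have hid : HasDerivAt (fun s : ℝ => x + s) 1 t := (hasDerivAt_id t).const_add x
      simpa [Function.comp_def] using h.comp t hid
    have h1 : HasDerivAt (fun s => ∑ i, ((c i + s) * Real.log (c i + s)))
        (∑ i, (Real.log (c i + t) + 1)) t := HasDerivAt.fun_sum fun i _ => hterm (c i) (hc i)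
    have h2 : HasDerivAt (fun s => ∑ i, ((a i + s) * Real.log (a i + s)))
        (∑ i, (Real.log (a i + t) + 1)) t := HasDerivAt.fun_sum fun i _ => hterm (a i) (ha i)
    have h3 : HasDerivAt (fun s => ∑ i, ((b i + s) * Real.log (b i + s)))
        (∑ i, (Real.log (b i + t) + 1)) t := HasDerivAt.fun_sum fun i _ => hterm (b i) (hb i)
    have h4 := (h1.sub (h2.const_mul (1/2 : ℝ))).sub (h3.const_mul (1/2 : ℝ))
    refine HasDerivAt.congr_deriv h4 ?_
    simp only [hF, Finset.sum_add_distrib, Finset.sum_const, Finset.card_univ,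
      nsmul_eq_mul, mul_one]
    ring
  have htend : Tendsto G atTop (𝓝 0) := by
    have hGeq : ∀ T : ℝ, G T =
        (∑ i, ((c i + T) * Real.log (c i + T) - T * Real.log T - c i * Real.log T - c i))
        - 1/2 * (∑ i, ((a i + T) * Real.log (a i + T) - T * Real.log T - a i * Real.log T - a i))
        - 1/2 * (∑ i, ((b i + T) * Real.log (b i + T) - T * Real.log T - b i * Real.log T - b i)) := by
      intro T
      simp only [hG, Finset.sum_sub_distrib, Finset.sum_const, Finset.card_univ,
        nsmul_eq_mul, ← Finset.sum_mul]
      linear_combination (Real.log T + 1) * hsum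
    have hlim : Tendsto (fun T : ℝ =>
        (∑ i, ((c i + T) * Real.log (c i + T) - T * Real.log T - c i * Real.log T - c i))
        - 1/2 * (∑ i, ((a i + T) * Real.log (a i + T) - T * Real.log T - a i * Real.log T - a i))
        - 1/2 * (∑ i, ((b i + T) * Real.log (b i + T) - T * Real.log T - b i * Real.log T - b i)))
        atTop (𝓝 ((∑ _i : Fin n, (0:ℝ)) - 1/2 * (∑ _i : Fin n, (0:ℝ))
          - 1/2 * (∑ _i : Fin n, (0:ℝ)))) := by
      refine Tendsto.sub (Tendsto.sub ?_ (Tendsto.const_mul _ ?_)) (Tendsto.const_mul _ ?_) <;>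
        exact tendsto_finset_sum _ fun i _ => k_tendsto (by first | exact hc i | exact ha i | exact hb i)
    have : Tendsto G atTop (𝓝 ((∑ _i : Fin n, (0:ℝ)) - 1/2 * (∑ _i : Fin n, (0:ℝ))
        - 1/2 * (∑ _i : Fin n, (0:ℝ)))) := hlim.congr (fun T => (hGeq T).symm)
    simpa using this
  have hFcont : ContinuousOn F (Ioi 0) := by
    intro t ht
    have ht0 : (0:ℝ) < t := ht
    have hsumc : ∀ (d : Fin n → ℝ), (∀ i, 0 ≤ d i) →
        ContinuousAt (fun s => ∑ i, Real.log (d i + s)) t := by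
      intro d hd
      exact tendsto_finset_sum _ fun i _ =>
        (Real.continuousAt_log (ne_of_gt (by linarith [hd i]) : d i + t ≠ 0)).comp
          ((continuous_const.add continuous_id).continuousAt)
    exact (((hsumc c hc).sub (continuousAt_const.mul (hsumc a ha))).sub
      (continuousAt_const.mul (hsumc b hb))).continuousWithinAt
  have hInt : IntegrableOn F (Ioi (0:ℝ)) := by
    have h01 : IntegrableOn F (Ioc (0:ℝ) 1) := by
      have hia : ∀ (d : Fin n → ℝ), (∀ i, 0 ≤ d i) →
          IntegrableOn (fun t => ∑ i, Real.log (d i + t)) (Ioc (0:ℝ) 1) := fun d hd =>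
        integrable_finset_sum Finset.univ fun i _ => log_integrableOn_Ioc (hd i)
      exact ((hia c hc).sub ((hia a ha).const_mul _)).sub ((hia b hb).const_mul _)
    have h1i : IntegrableOn F (Ioi (1:ℝ)) := by
      set K := (∑ i, (c i)^2) + 1/2 * (∑ i, (a i)^2) + 1/2 * (∑ i, (b i)^2) with hK
      have hg : IntegrableOn (fun t : ℝ => K * t ^ (-2 : ℝ)) (Ioi 1) :=
        (integrableOn_Ioi_rpow_of_lt (by norm_num) one_pos).const_mul K
      refine Integrable.mono' hg
        (((hFcont.mono (Ioi_subset_Ioi zero_le_one)).aestronglyMeasurable measurableSet_Ioi)) ?_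
      filter_upwards [ae_restrict_mem measurableSet_Ioi] with t ht
      have ht0 : (0:ℝ) < t := lt_trans one_pos ht
      have hFeq : F t = (∑ i, (Real.log (c i + t) - Real.log t - c i / t))
          - 1/2 * (∑ i, (Real.log (a i + t) - Real.log t - a i / t))
          - 1/2 * (∑ i, (Real.log (b i + t) - Real.log t - b i / t)) := by
        simp only [hF, Finset.sum_sub_distrib, Finset.sum_const, Finset.card_univ,
          nsmul_eq_mul, ← Finset.sum_div]
        linear_combination (1/t) * hsum
      have hbound : ∀ (d : Fin n → ℝ), (∀ i, 0 ≤ d i) →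
          |∑ i, (Real.log (d i + t) - Real.log t - d i / t)| ≤ (∑ i, (d i)^2) / t^2 := by
        intro d hd
        calc |∑ i, (Real.log (d i + t) - Real.log t - d i / t)|
            ≤ ∑ i, |Real.log (d i + t) - Real.log t - d i / t| :=
              Finset.abs_sum_le_sum_abs _ _
          _ ≤ ∑ i, (d i)^2 / t^2 := Finset.sum_le_sum fun i _ => abs_m_le (hd i) ht0
          _ = (∑ i, (d i)^2) / t^2 := by rw [Finset.sum_div]
      have h3 := hbound c hc
      have h4 := hbound a ha
      have h5 := hbound b hb
      have e2 : K * t ^ (-2:ℝ) = K / t^2 := by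
        rw [Real.rpow_neg ht0.le, show ((2:ℝ)) = ((2:ℕ):ℝ) by norm_num, Real.rpow_natCast]
        ring
      rw [Real.norm_eq_abs, hFeq, e2]
      set X := ∑ i, (Real.log (c i + t) - Real.log t - c i / t)
      set Y := ∑ i, (Real.log (a i + t) - Real.log t - a i / t)
      set Z := ∑ i, (Real.log (b i + t) - Real.log t - b i / t)
      have habs : |X - 1/2 * Y - 1/2 * Z| ≤ |X| + 1/2 * |Y| + 1/2 * |Z| := by
        rw [abs_le]
        constructor <;>
          nlinarith [le_abs_self X, neg_abs_le X, le_abs_self Y, neg_abs_le Y,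
            le_abs_self Z, neg_abs_le Z]
      have e3 : K / t^2 = (∑ i, (c i)^2)/t^2 + 1/2 * ((∑ i, (a i)^2)/t^2)
          + 1/2 * ((∑ i, (b i)^2)/t^2) := by
        rw [hK]; field_simp
      rw [e3]
      linarith
    have := h01.union h1i
    rwa [Set.Ioc_union_Ioi_eq_Ioi zero_le_one] at this
  have hmain := integral_Ioi_of_hasDerivAt_of_tendsto
    (hGcont.continuousWithinAt) hderiv hInt htend
  rw [hmain]
  simp only [hG, add_zero]
  ring

lemma trFun_herm {m : Type*} [Fintype m] [DecidableEq m] (f : ℝ → ℝ) {M : Matrix m m ℂ}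
    (hM : M.IsHermitian) : trFun f M = ∑ i, f (hM.eigenvalues i) := dif_pos hM

lemma trace_cfc' {m : Type*} [Fintype m] [DecidableEq m] (M : Matrix m m ℂ) (hM : M.IsHermitian) (f : ℝ → ℝ) :
    (cfc f M).trace = ∑ i, (f (hM.eigenvalues i) : ℂ) := by
  rw [hM.cfc_eq f, Matrix.IsHermitian.cfc, Unitary.conjStarAlgAut_apply, Matrix.trace_mul_cycle,
    Unitary.star_mul_self_of_mem (SetLike.coe_mem _), one_mul, Matrix.trace_diagonal]
  simp

lemma smul_one_herm {m : Type*} [Fintype m] [DecidableEq m] (t : ℝ) :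
    (t • (1 : Matrix m m ℂ)).IsHermitian := by
  rw [Matrix.IsHermitian, Matrix.conjTranspose_smul, star_trivial, Matrix.conjTranspose_one]

lemma cfc_shift {m : Type*} [Fintype m] [DecidableEq m] (M : Matrix m m ℂ) (hM : M.IsHermitian)
    (f : ℝ → ℝ) (t : ℝ) :
    cfc f (M + t • (1 : Matrix m m ℂ)) = cfc (fun x => f (x + t)) M := by
  have hsp : (spectrum ℝ M).Finite := M.finite_real_spectrum
  have hsa : IsSelfAdjoint M := hM
  have e1 : cfc (fun x : ℝ => x + t) M = M + t • (1 : Matrix m m ℂ) := by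
    rw [cfc_add (a := M) (fun x => x) (fun _ => t) (hsp.continuousOn _) (hsp.continuousOn _),
      cfc_id' ℝ M, cfc_const t M, Algebra.algebraMap_eq_smul_one]
  rw [← e1, ← cfc_comp f (fun x => x + t) M hsa ((hsp.image _).continuousOn _) (hsp.continuousOn _)]
  rfl

lemma trFun_shift {m : Type*} [Fintype m] [DecidableEq m] {M : Matrix m m ℂ} (hM : M.IsHermitian)
    (f : ℝ → ℝ) (t : ℝ) :
    trFun f (M + t • (1 : Matrix m m ℂ)) = ∑ i, f (hM.eigenvalues i + t) := by
  have h' : (M + t • (1 : Matrix m m ℂ)).IsHermitian := hM.add (smul_one_herm t)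
  rw [trFun_herm f h']
  have key : ((∑ i, f (h'.eigenvalues i) : ℝ) : ℂ) = ((∑ i, f (hM.eigenvalues i + t) : ℝ) : ℂ) := by
    push_cast
    rw [← trace_cfc' _ h' f, ← trace_cfc' _ hM (fun x => f (x + t)), cfc_shift M hM f t]
  exact_mod_cast key

lemma sum_eigs_eq_trace {m : Type*} [Fintype m] [DecidableEq m] {M : Matrix m m ℂ}
    (hM : M.IsHermitian) : ((∑ i, hM.eigenvalues i : ℝ) : ℂ) = M.trace := by
  push_cast
  have h := cfc_id' ℝ M hM
  rw [← trace_cfc' _ hM (fun x => x), h]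

lemma smul_psd {m : Type*} [Fintype m] [DecidableEq m] {M : Matrix m m ℂ} (hM : M.PosSemidef)
    {r : ℝ} (hr : 0 ≤ r) : (r • M).PosSemidef := by
  refine ⟨?_, fun x => ?_⟩
  · rw [Matrix.IsHermitian, Matrix.conjTranspose_smul, star_trivial, hM.1]
  · exact (hM.smul hr).2 x

/-- Integral representation of the quantum Jensen–Shannon divergence:
J(A,B) = ∫₀^∞ d_t(A,B)² dt, where d_t is the shifted trace-log distance. -/
theorem qjsd_integral_representation {n : ℕ} (A B : Matrix (Fin n) (Fin n) ℂ)
    (hA : A.PosSemidef) (hB : B.PosSemidef) :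
    Jdiv A B = ∫ t in Set.Ioi (0 : ℝ), dsqLog (A + t • 1) (B + t • 1) := by
  classical
  have hC : (((1:ℝ)/2) • (A + B)).PosSemidef := smul_psd (hA.add hB) (by norm_num)
  have htr : ∑ i, hC.1.eigenvalues i
      = 1/2 * ∑ i, hA.1.eigenvalues i + 1/2 * ∑ i, hB.1.eigenvalues i := by
    have h1 := sum_eigs_eq_trace hA.1
    have h2 := sum_eigs_eq_trace hB.1
    have h3 := sum_eigs_eq_trace hC.1
    have h4 : (((1:ℝ)/2) • (A + B)).trace = ((1:ℝ)/2) • (A.trace + B.trace) := by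
      rw [Matrix.trace_smul, Matrix.trace_add]
    have key : ((∑ i, hC.1.eigenvalues i : ℝ) : ℂ)
        = ((1/2 * ∑ i, hA.1.eigenvalues i + 1/2 * ∑ i, hB.1.eigenvalues i : ℝ) : ℂ) := by
      rw [h3, h4, Complex.real_smul]
      push_cast
      push_cast at h1 h2
      rw [← h1, ← h2]
      ring
    exact_mod_cast key
  have hpt : ∀ t ∈ Ioi (0:ℝ), dsqLog (A + t • 1) (B + t • 1)
      = ∑ i, Real.log (hC.1.eigenvalues i + t)
        - 1/2 * ∑ i, Real.log (hA.1.eigenvalues i + t)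
        - 1/2 * ∑ i, Real.log (hB.1.eigenvalues i + t) := by
    intro t _
    have hmid : ((1:ℝ)/2) • (A + t • 1 + (B + t • 1))
        = ((1:ℝ)/2) • (A + B) + t • (1 : Matrix (Fin n) (Fin n) ℂ) := by
      module
    rw [dsqLog, hmid, trFun_shift hC.1 Real.log t, trFun_shift hA.1 Real.log t,
      trFun_shift hB.1 Real.log t]
  have hJ : Jdiv A B
      = 1/2 * ∑ i, (hA.1.eigenvalues i * Real.log (hA.1.eigenvalues i))
        + 1/2 * ∑ i, (hB.1.eigenvalues i * Real.log (hB.1.eigenvalues i))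
        - ∑ i, (hC.1.eigenvalues i * Real.log (hC.1.eigenvalues i)) := by
    rw [Jdiv, trFun_herm _ hA.1, trFun_herm _ hB.1, trFun_herm _ hC.1]
  rw [hJ, MeasureTheory.setIntegral_congr_fun measurableSet_Ioi hpt]
  exact (core _ _ _ (fun i => hA.eigenvalues_nonneg i) (fun i => hB.eigenvalues_nonneg i)
    (fun i => hC.eigenvalues_nonneg i) htr).symm
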